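/- arXiv:1807.00184 — 2 statements merged into one kernel-verified Lean document; each statement's English description precedes it below -/
import Mathlib

section
/- For α ∈ (0, 1/2), x = (x₁, x₂) with 0 ≤ x₂ ≤ x₁, the integral ∫_{(0,2x₁)×(0,x₂)} (y₂ − x₂)/|x − y|^{2+2α} dy is bounded below by −(1/α)·(1/(1−2α) − 2^{−α})·x₁^{1−2α}. -/
/-!
For fixed `y₁`, the function `t ↦ -(2α)⁻¹ (a² + (x₂ - t)²)^(-α)` with `a = x₁ - y₁` is a primitive
of the integrand in `y₂`, so the inner integral equals `(2α)⁻¹ ((a² + x₂²)^(-α) - |a|^(-2α))`.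
On the rectangle `a² + x₂² ≤ 2x₁²`, and since the exponent `-α` is negative the inner integral is
at least `(2α)⁻¹ ((2x₁²)^(-α) - |x₁ - y₁|^(-2α))`. The singularity `|x₁ - y₁|^(-2α)` is integrable
because `2α < 1`, and integrating this lower bound over `y₁ ∈ (0, 2x₁)` gives exactly the constant.
-/

open Real MeasureTheory Set

theorem sq_rpow_eq_abs_rpow (t s : ℝ) : (t ^ 2) ^ s = |t| ^ (2 * s) := by
  rw [← sq_abs, ← rpow_natCast, ← rpow_mul (abs_nonneg t)]
  norm_num

theorem hasDerivAt_rpow_neg_sq_add_sub_sq {α a c : ℝ} (t : ℝ) (hα : α ≠ 0) (ha : a ≠ 0) :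
    HasDerivAt (fun s => -(1 / (2 * α)) * (a ^ 2 + (c - s) ^ 2) ^ (-α))
      ((t - c) / (a ^ 2 + (c - t) ^ 2) ^ (1 + α)) t := by
  have hpos : 0 < a ^ 2 + (c - t) ^ 2 := by positivity
  have hbase : HasDerivAt (fun s => a ^ 2 + (c - s) ^ 2) (2 * (c - t) * (-1)) t := by
    simpa using (((hasDerivAt_id t).const_sub c).pow 2).const_add (a ^ 2)
  refine ((hbase.rpow_const (p := -α) (Or.inl hpos.ne')).const_mul _).congr_deriv ?_
  rw [show -α - 1 = -(1 + α) by ring, rpow_neg hpos.le]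
  field_simp
  ring

theorem integral_Ioo_sub_div_sq_add_sub_sq_rpow {α a c : ℝ} (hα : α ≠ 0) (ha : a ≠ 0)
    (hc : 0 ≤ c) :
    ∫ t in Ioo 0 c, (t - c) / (a ^ 2 + (c - t) ^ 2) ^ (1 + α) =
      1 / (2 * α) * ((a ^ 2 + c ^ 2) ^ (-α) - (a ^ 2) ^ (-α)) := by
  have hcont : ContinuousOn (fun t => (t - c) / (a ^ 2 + (c - t) ^ 2) ^ (1 + α)) (uIcc 0 c) :=
    (continuousOn_id.sub continuousOn_const).div
      (ContinuousOn.rpow_const (by fun_prop) fun _ _ => Or.inl (by positivity))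
      fun _ _ => by positivity
  rw [← integral_Ioc_eq_integral_Ioo, ← intervalIntegral.integral_of_le hc,
    intervalIntegral.integral_eq_sub_of_hasDerivAt
      (fun t _ => hasDerivAt_rpow_neg_sq_add_sub_sq t hα ha) hcont.intervalIntegrable]
  simp only [sub_zero, sub_self, zero_pow two_ne_zero, add_zero]
  ring

theorem le_integral_Ioo_sub_div_sq_add_sub_sq_rpow {α a c M : ℝ} (hα : 0 < α) (ha : a ≠ 0)
    (hc : 0 ≤ c) (hM : a ^ 2 + c ^ 2 ≤ M) :
    1 / (2 * α) * (M ^ (-α) - |a| ^ (-(2 * α))) ≤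
      ∫ t in Ioo 0 c, (t - c) / (a ^ 2 + (c - t) ^ 2) ^ (1 + α) := by
  rw [integral_Ioo_sub_div_sq_add_sub_sq_rpow hα.ne' ha hc, sq_rpow_eq_abs_rpow, mul_neg]
  gcongr ?_ * (?_ - _)
  exact rpow_le_rpow_of_nonpos (by positivity) hM (by linarith)

theorem intervalIntegrable_abs_rpow {r : ℝ} (hr : -1 < r) (a b : ℝ) :
    IntervalIntegrable (fun x => |x| ^ r) volume a b := by
  have h_nonneg : ∀ c, 0 ≤ c → IntervalIntegrable (fun x => |x| ^ r) volume 0 c := fun c hc =>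
    (intervalIntegral.intervalIntegrable_rpow' hr).congr fun x hx => by
      rw [uIoc_of_le hc] at hx
      simp only [abs_of_pos hx.1]
  have h_zero : ∀ c, IntervalIntegrable (fun x => |x| ^ r) volume 0 c := by
    intro c
    rcases le_total 0 c with hc | hc
    · exact h_nonneg c hc
    · simpa using (IntervalIntegrable.iff_comp_neg).mp (h_nonneg (-c) (by linarith))
  exact (h_zero a).symm.trans (h_zero b)

theorem integral_abs_rpow_neg_self {r h : ℝ} (hr : -1 < r) (hh : 0 ≤ h) :
    ∫ x in -h..h, |x| ^ r = 2 * h ^ (r + 1) / (r + 1) := by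
  have h_half : ∫ x in (0 : ℝ)..h, |x| ^ r = h ^ (r + 1) / (r + 1) := by
    rw [intervalIntegral.integral_congr (g := fun x => x ^ r) fun x hx => by
      rw [uIcc_of_le hh] at hx
      simp only [abs_of_nonneg hx.1]]
    rw [integral_rpow (Or.inl hr), zero_rpow (by linarith), sub_zero]
  have h_neg : ∫ x in -h..0, |x| ^ r = ∫ x in (0 : ℝ)..h, |x| ^ r := by
    simpa using (intervalIntegral.integral_comp_neg (a := 0) (b := h) (fun x => |x| ^ r)).symm
  rw [← intervalIntegral.integral_add_adjacent_intervals (intervalIntegrable_abs_rpow hr _ _)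
    (intervalIntegrable_abs_rpow hr _ _), h_neg, h_half]
  ring

theorem intervalIntegrable_abs_sub_rpow {r : ℝ} (hr : -1 < r) (c a b : ℝ) :
    IntervalIntegrable (fun y => |c - y| ^ r) volume a b := by
  simpa using (intervalIntegrable_abs_rpow hr (c - a) (c - b)).comp_sub_left c

theorem integral_abs_sub_rpow_zero_two_mul {r x : ℝ} (hr : -1 < r) (hx : 0 ≤ x) :
    ∫ y in (0 : ℝ)..2 * x, |x - y| ^ r = 2 * x ^ (r + 1) / (r + 1) := by
  rw [intervalIntegral.integral_comp_sub_left (fun t => |t| ^ r) x, two_mul, sub_add_cancel_left,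
    sub_zero, integral_abs_rpow_neg_self hr hx]

theorem integral_Ioo_rpow_sub_abs_sub_rpow {α x : ℝ} (hα : α ≠ 0) (hα' : α < 1 / 2)
    (hx : 0 < x) :
    ∫ y in Ioo 0 (2 * x), 1 / (2 * α) * ((2 * x ^ 2) ^ (-α) - |x - y| ^ (-(2 * α))) =
      -(1 / α) * (1 / (1 - 2 * α) - 2 ^ (-α)) * x ^ (1 - 2 * α) := by
  have hr : -1 < -(2 * α) := by linarith
  have hr' : -(2 * α) + 1 ≠ 0 := by linarith
  rw [← integral_Ioc_eq_integral_Ioo, ← intervalIntegral.integral_of_le (by linarith),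
    intervalIntegral.integral_const_mul, intervalIntegral.integral_sub intervalIntegrable_const
      (intervalIntegrable_abs_sub_rpow hr x _ _), intervalIntegral.integral_const,
    integral_abs_sub_rpow_zero_two_mul hr hx.le, smul_eq_mul, mul_rpow zero_le_two (sq_nonneg x),
    sq_rpow_eq_abs_rpow, abs_of_pos hx, mul_neg, show 1 - 2 * α = -(2 * α) + 1 by ring,
    rpow_add_one hx.ne']
  field_simp
  ring

theorem two_rpow_neg_le_one_div_one_sub_two_mul {α : ℝ} (hα : 0 ≤ α) (hα' : α < 1 / 2) :
    (2 : ℝ) ^ (-α) ≤ 1 / (1 - 2 * α) :=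
  calc (2 : ℝ) ^ (-α) ≤ 1 := rpow_le_one_of_one_le_of_nonpos one_le_two (by linarith)
    _ ≤ 1 / (1 - 2 * α) := by rw [le_div_iff₀ (by linarith)]; linarith

theorem setIntegral_le_setIntegral_prod {X Y : Type*} [MeasurableSpace X] [MeasurableSpace Y]
    {μ : Measure X} {ν : Measure Y} [SFinite μ] [SFinite ν] {f : X × Y → ℝ} {g : X → ℝ}
    {s : Set X} {t : Set Y} (hf : IntegrableOn f (s ×ˢ t) (μ.prod ν)) (hg : IntegrableOn g s μ)
    (hle : ∀ᵐ x ∂μ.restrict s, g x ≤ ∫ y in t, f (x, y) ∂ν) :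
    ∫ x in s, g x ∂μ ≤ ∫ z in s ×ˢ t, f z ∂μ.prod ν := by
  rw [setIntegral_prod f hf]
  refine integral_mono_ae hg ?_ hle
  rw [IntegrableOn, ← Measure.prod_restrict] at hf
  exact hf.integral_prod_left

theorem bad_part_integral_lower_bound (α x₁ x₂ : ℝ)
    (hα : α ∈ Set.Ioo (0:ℝ) (1/2)) (hx₂ : 0 ≤ x₂) (hx : x₂ ≤ x₁) (hx₁ : 0 < x₁) :
    -(1 / α) * (1 / (1 - 2 * α) - 2 ^ (-α)) * x₁ ^ (1 - 2 * α) ≤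
      ∫ y in Set.Ioo (0:ℝ) (2 * x₁) ×ˢ Set.Ioo (0:ℝ) x₂,
        (y.2 - x₂) / (((x₁ - y.1) ^ 2 + (x₂ - y.2) ^ 2) ^ (1 + α)) := by
  obtain ⟨hα₀, hα₁⟩ := hα
  by_cases hint : IntegrableOn
      (fun y : ℝ × ℝ => (y.2 - x₂) / ((x₁ - y.1) ^ 2 + (x₂ - y.2) ^ 2) ^ (1 + α))
      (Ioo 0 (2 * x₁) ×ˢ Ioo 0 x₂)
  · have hr : -1 < -(2 * α) := by linarith
    have hne : ∀ᵐ y : ℝ, y ∉ ({x₁} : Set ℝ) := measure_eq_zero_iff_ae_notMem.1 (by simp)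
    rw [← integral_Ioo_rpow_sub_abs_sub_rpow hα₀.ne' hα₁ hx₁, Measure.volume_eq_prod]
    rw [Measure.volume_eq_prod] at hint
    refine setIntegral_le_setIntegral_prod hint ?_ ?_
    · exact (intervalIntegrable_iff_integrableOn_Ioo_of_le (by linarith)).mp
        ((intervalIntegrable_const.sub (intervalIntegrable_abs_sub_rpow hr x₁ _ _)).const_mul _)
    · filter_upwards [ae_restrict_mem measurableSet_Ioo, ae_restrict_of_ae hne] with y hy hy₁
      exact le_integral_Ioo_sub_div_sq_add_sub_sq_rpow hα₀ (sub_ne_zero.2 (Ne.symm hy₁)) hx₂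
        (by nlinarith [hy.1, hy.2])
  · -- A non-integrable integrand has integral `0` by convention, and the bound is nonpositive.
    rw [integral_undef hint, neg_mul, neg_mul, neg_nonpos]
    have := sub_nonneg.2 (two_rpow_neg_le_one_div_one_sub_two_mul hα₀.le hα₁)
    positivity
end

section
/- For α ∈ (0, 1/2) and x₁ > 0, the integral over A₁ = {y : y₂ ∈ (0,1), y₁ ∈ (x₁ + y₂, 3x₁ + y₂)} of y₂/((y₁−x₁)² + y₂²)^{1+α} dy₁ dy₂, evaluated at base point x = (x₁, 0), is at least (1/(6·20^α·α))·x₁^{1−2α}, provided x₁ is smaller than a constant δ_α depending only on α. -/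
/-!
The shear `(t, b) ↦ (t + b + x₁, b)` preserves Lebesgue measure and maps the box
`(0, 2x₁) × (0, 1)` onto `A₁`, turning the integrand into `b / ((t + b)² + b²)^(1+α)`.
This kernel is dominated by `t^(-(α+1/2)) b^(-(α+1/2))`, which is integrable on boxes because
`α < 1/2`; integrability is what keeps the Bochner integral from being the junk value `0`. On the sub-box `t < 2x₁ < b` the kernel is at least
`b^(-(1+2α)) / 5^(1+α)`, whose integral is `2x₁ ((2x₁)^(-2α) - 1) / (2α 5^(1+α))`; this beats the
claimed bound as soon as `(2x₁)^(-2α) ≥ 6`, i.e. for `x₁ < 6^(-1/(2α)) / 2`.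
-/

open Real MeasureTheory Set

theorem setIntegral_comp_shear {E : Type*} [NormedAddCommGroup E] [NormedSpace ℝ E]
    (c : ℝ) (f : ℝ × ℝ → E) (s : Set (ℝ × ℝ)) :
    ∫ z in (fun z : ℝ × ℝ => (z.1 + z.2 + c, z.2)) ⁻¹' s, f (z.1 + z.2 + c, z.2) =
      ∫ y in s, f y := by
  let e : ℝ × ℝ ≃ᵐ ℝ × ℝ :=
    { toFun := fun z => (z.1 + z.2 + c, z.2)
      invFun := fun y => (y.1 - y.2 - c, y.2)
      left_inv := fun z => Prod.ext (by ring) rfl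
      right_inv := fun y => Prod.ext (by ring) rfl
      measurable_toFun := by
        change Measurable fun z : ℝ × ℝ => (z.1 + z.2 + c, z.2); fun_prop
      measurable_invFun := by
        change Measurable fun y : ℝ × ℝ => (y.1 - y.2 - c, y.2); fun_prop }
  have he : MeasurePreserving e := by
    have := ((measurePreserving_add_right volume c).prod (MeasurePreserving.id volume)).comp
      (measurePreserving_add_prod (volume : Measure ℝ) (volume : Measure ℝ))
    rwa [← Measure.volume_eq_prod] at this
  exact he.setIntegral_preimage_emb e.measurableEmbedding f s

noncomputable def shearedKernel (α t b : ℝ) : ℝ := b / ((t + b) ^ 2 + b ^ 2) ^ (1 + α)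

section
variable {α t b : ℝ}

theorem shearedKernel_nonneg (hb : 0 ≤ b) : 0 ≤ shearedKernel α t b := by
  unfold shearedKernel; positivity

theorem shearedKernel_le {p : ℝ} (hα : -1 ≤ α) (hp₀ : 0 ≤ p) (hp : p ≤ 2 + 2 * α)
    (ht : 0 < t) (hb : 0 < b) : shearedKernel α t b ≤ t ^ (-p) * b ^ (p - 1 - 2 * α) := by
  have hsplit : ((t + b) ^ 2) ^ (1 + α) = (t + b) ^ p * (t + b) ^ (2 + 2 * α - p) := by
    rw [← rpow_add (by positivity), ← rpow_natCast, ← rpow_mul (by positivity)]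
    ring_nf
  have hden : t ^ p * b ^ (2 + 2 * α - p) ≤ ((t + b) ^ 2 + b ^ 2) ^ (1 + α) :=
    calc t ^ p * b ^ (2 + 2 * α - p) ≤ (t + b) ^ p * (t + b) ^ (2 + 2 * α - p) := by
          gcongr <;> linarith
      _ = ((t + b) ^ 2) ^ (1 + α) := hsplit.symm
      _ ≤ ((t + b) ^ 2 + b ^ 2) ^ (1 + α) := by gcongr <;> nlinarith
  calc shearedKernel α t b ≤ b / (t ^ p * b ^ (2 + 2 * α - p)) :=
        div_le_div_of_nonneg_left hb.le (by positivity) hden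
    _ = t ^ (-p) * b ^ (p - 1 - 2 * α) := by
        rw [rpow_neg ht.le, show p - 1 - 2 * α = 1 - (2 + 2 * α - p) by ring,
          rpow_sub hb 1, rpow_one]
        field_simp

theorem rpow_div_le_shearedKernel (hα : -1 ≤ α) (ht : 0 ≤ t) (htb : t ≤ b) (hb : 0 < b) :
    b ^ (-(1 + 2 * α)) / 5 ^ (1 + α) ≤ shearedKernel α t b := by
  have hden : ((t + b) ^ 2 + b ^ 2) ^ (1 + α) ≤ 5 ^ (1 + α) * b ^ (2 + 2 * α) := by
    calc ((t + b) ^ 2 + b ^ 2) ^ (1 + α) ≤ (5 * b ^ 2) ^ (1 + α) := by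
          gcongr <;> nlinarith
      _ = 5 ^ (1 + α) * b ^ (2 + 2 * α) := by
          rw [mul_rpow (by norm_num) (by positivity), ← rpow_natCast, ← rpow_mul hb.le]
          ring_nf
  calc b ^ (-(1 + 2 * α)) / 5 ^ (1 + α) = b / (5 ^ (1 + α) * b ^ (2 + 2 * α)) := by
        rw [show -(1 + 2 * α) = 1 - (2 + 2 * α) by ring, rpow_sub hb 1, rpow_one]
        field_simp
    _ ≤ shearedKernel α t b :=
        div_le_div_of_nonneg_left hb.le (by positivity) hden
end

theorem integrableOn_shearedKernel {α a b : ℝ} (hα₀ : -1 / 2 ≤ α) (hα₁ : α < 1 / 2)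
    (ha : 0 < a) (hb : 0 < b) :
    IntegrableOn (fun z : ℝ × ℝ => shearedKernel α z.1 z.2) (Ioo 0 a ×ˢ Ioo 0 b) := by
  -- splitting the singularity evenly: both exponents `-p` exceed `-1` exactly when `α < 1/2`
  set p := α + 1 / 2 with hp
  have hpow : ∀ {c : ℝ}, 0 < c → IntegrableOn (fun s : ℝ => s ^ (-p)) (Ioo 0 c) := fun hc =>
    (intervalIntegral.integrableOn_Ioo_rpow_iff hc).2 (by linarith)
  have hdom : IntegrableOn (fun z : ℝ × ℝ => z.1 ^ (-p) * z.2 ^ (-p)) (Ioo 0 a ×ˢ Ioo 0 b) := by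
    rw [IntegrableOn, Measure.volume_eq_prod, ← Measure.prod_restrict]
    exact (hpow ha).mul_prod (hpow hb)
  refine hdom.mono' (Measurable.aestronglyMeasurable (by unfold shearedKernel; fun_prop)) ?_
  refine ae_restrict_of_forall_mem (measurableSet_Ioo.prod measurableSet_Ioo) ?_
  rintro z ⟨hz₁, hz₂⟩
  rw [norm_of_nonneg (shearedKernel_nonneg hz₂.1.le)]
  have hle := shearedKernel_le (α := α) (p := p) (by linarith) (by linarith) (by linarith)
    hz₁.1 hz₂.1
  rwa [show p - 1 - 2 * α = -p by rw [hp]; ring] at hle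

theorem le_setIntegral_shearedKernel {α a : ℝ} (hα₀ : 0 < α) (hα₁ : α < 1 / 2)
    (ha : 0 < a) (ha₁ : a < 1) :
    a * (a ^ (-(2 * α)) - 1) / (2 * α * 5 ^ (1 + α)) ≤
      ∫ z in Ioo 0 a ×ˢ Ioo 0 1, shearedKernel α z.1 z.2 := by
  have hpow : IntegrableOn (fun b : ℝ => b ^ (-(1 + 2 * α))) (Ioo a 1) := by
    rw [← intervalIntegrable_iff_integrableOn_Ioo_of_le ha₁.le]
    exact intervalIntegral.intervalIntegrable_rpow
      (Or.inr (notMem_uIcc_of_lt ha (by linarith)))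
  have hint : ∫ b in Ioo a 1, b ^ (-(1 + 2 * α)) = (a ^ (-(2 * α)) - 1) / (2 * α) := by
    rw [← integral_Ioc_eq_integral_Ioo, ← intervalIntegral.integral_of_le ha₁.le,
      integral_rpow (Or.inr ⟨by linarith, notMem_uIcc_of_lt ha (by linarith)⟩),
      show -(1 + 2 * α) + 1 = -(2 * α) by ring, one_rpow]
    field_simp
    ring
  have hsub : Ioo 0 a ×ˢ Ioo a 1 ⊆ Ioo 0 a ×ˢ Ioo (0 : ℝ) 1 :=
    prod_mono subset_rfl (Ioo_subset_Ioo_left ha.le)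
  have hlower : IntegrableOn (fun z : ℝ × ℝ => 1 * (z.2 ^ (-(1 + 2 * α)) / 5 ^ (1 + α)))
      (Ioo 0 a ×ˢ Ioo a 1) := by
    rw [IntegrableOn, Measure.volume_eq_prod, ← Measure.prod_restrict]
    have hone : IntegrableOn (fun _ : ℝ => (1 : ℝ)) (Ioo 0 a) :=
      integrableOn_const measure_Ioo_lt_top.ne
    exact hone.mul_prod (hpow.div_const _)
  calc a * (a ^ (-(2 * α)) - 1) / (2 * α * 5 ^ (1 + α))
      = (∫ _ in Ioo 0 a, (1 : ℝ)) * ∫ b in Ioo a 1, b ^ (-(1 + 2 * α)) / 5 ^ (1 + α) := by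
        rw [setIntegral_const, integral_div, hint]
        simp only [volume_real_Ioo, sub_zero, ha.le, sup_of_le_left, smul_eq_mul, mul_one]
        field_simp
    _ = ∫ z in Ioo 0 a ×ˢ Ioo a 1, 1 * (z.2 ^ (-(1 + 2 * α)) / 5 ^ (1 + α)) :=
        (setIntegral_prod_mul _ _ _ _).symm
    _ ≤ ∫ z in Ioo 0 a ×ˢ Ioo a 1, shearedKernel α z.1 z.2 := by
        refine setIntegral_mono_on hlower
          ((integrableOn_shearedKernel (by linarith) hα₁ ha one_pos).mono_set hsub)
          (measurableSet_Ioo.prod measurableSet_Ioo) ?_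
        rintro z ⟨ht, hb⟩
        rw [one_mul]
        exact rpow_div_le_shearedKernel (by linarith) ht.1.le (by linarith [ht.2, hb.1])
          (ha.trans hb.1)
    _ ≤ ∫ z in Ioo 0 a ×ˢ Ioo 0 1, shearedKernel α z.1 z.2 :=
        setIntegral_mono_set (integrableOn_shearedKernel (by linarith) hα₁ ha one_pos)
          (ae_restrict_of_forall_mem (measurableSet_Ioo.prod measurableSet_Ioo)
            fun z hz => shearedKernel_nonneg hz.2.1.le)
          (Filter.Eventually.of_forall hsub)

theorem one_div_mul_rpow_le_of_six_le_rpow {α x : ℝ} (hα : 0 < α) (hx : 0 < x)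
    (h6 : 6 ≤ (2 * x) ^ (-(2 * α))) :
    1 / (6 * 20 ^ α * α) * x ^ (1 - 2 * α) ≤
      2 * x * ((2 * x) ^ (-(2 * α)) - 1) / (2 * α * 5 ^ (1 + α)) := by
  have h20 : (20 : ℝ) ^ α = 2 ^ (2 * α) * 5 ^ α := by
    rw [rpow_mul (by norm_num), ← mul_rpow (by positivity) (by norm_num)]
    norm_num
  have hx' : x ^ (1 - 2 * α) = 2 ^ (2 * α) * x * (2 * x) ^ (-(2 * α)) := by
    rw [rpow_sub hx, rpow_one, rpow_neg (by positivity), mul_rpow (by norm_num) hx.le]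
    field_simp
  rw [h20, hx', rpow_add (by norm_num), rpow_one]
  have h2 : 0 < (2 : ℝ) ^ (2 * α) := by positivity
  have h5 : 0 < (5 : ℝ) ^ α := by positivity
  field_simp
  nlinarith [mul_pos (mul_pos h2 h5) (mul_pos hα hx)]

theorem good_part_integral_lower_bound (α : ℝ) (hα : α ∈ Set.Ioo (0:ℝ) (1/2)) :
    ∃ δ > (0:ℝ), ∀ x₁ : ℝ, 0 < x₁ → x₁ < δ →
      (1 / (6 * 20 ^ α * α)) * x₁ ^ (1 - 2 * α) ≤
        ∫ y in {y : ℝ × ℝ | y.2 ∈ Set.Ioo (0:ℝ) 1 ∧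
            y.1 ∈ Set.Ioo (x₁ + y.2) (3 * x₁ + y.2)},
          y.2 / (((y.1 - x₁) ^ 2 + y.2 ^ 2) ^ (1 + α)) := by
  obtain ⟨hα₀, hα₁⟩ := hα
  refine ⟨6 ^ (-(1 / (2 * α))) / 2, by positivity, fun x₁ hx₁ hδ => ?_⟩
  have h6 : 6 ≤ (2 * x₁) ^ (-(2 * α)) := by
    calc (6 : ℝ) = (6 ^ (-(1 / (2 * α)))) ^ (-(2 * α)) := by
          rw [← rpow_mul (by norm_num), show -(1 / (2 * α)) * -(2 * α) = 1 by field_simp,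
            rpow_one]
      _ ≤ (2 * x₁) ^ (-(2 * α)) :=
          rpow_le_rpow_of_nonpos (by positivity) (by linarith) (by linarith)
  have h2x₁ : 2 * x₁ < 1 := by
    by_contra! h
    have := rpow_le_one_of_one_le_of_nonpos h (by linarith : -(2 * α) ≤ 0)
    linarith
  have hbox : (fun z : ℝ × ℝ => (z.1 + z.2 + x₁, z.2)) ⁻¹'
      {y : ℝ × ℝ | y.2 ∈ Ioo 0 1 ∧ y.1 ∈ Ioo (x₁ + y.2) (3 * x₁ + y.2)} =
      Ioo 0 (2 * x₁) ×ˢ Ioo 0 1 := by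
    ext z
    simp only [mem_preimage, mem_ofPred_eq, mem_prod, mem_Ioo]
    constructor <;> rintro ⟨⟨h₁, h₂⟩, h₃, h₄⟩ <;> refine ⟨⟨?_, ?_⟩, ?_, ?_⟩ <;> linarith
  rw [← setIntegral_comp_shear x₁, hbox]
  simp only [add_sub_cancel_right]
  exact (one_div_mul_rpow_le_of_six_le_rpow hα₀ hx₁ h6).trans
    (le_setIntegral_shearedKernel hα₀ hα₁ (by positivity) h2x₁)
end
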